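/- arXiv:1509.01676 — 5 statements merged into one kernel-verified Lean document; each statement's English description precedes it below -/
import Mathlib

section
/- If f: [0,1] → ℝ⁺ is decreasing and twice continuously differentiable, a, b > 0, and f''(x)·(f(x)+b) ≥ 2·(f'(x))² for all x ∈ (0,1), then the function t(x) = 1 - a·(1-x)·f(x)/(f(x)+b) is concave on (0,1). -/
/-!
The hypothesis `f'' (f + b) ≥ 2 f'²` says exactly that `(f + b)⁻¹` has nonpositive second
derivative, so `f / (f + b) = 1 - b (f + b)⁻¹` is convex. It is also nonnegative and decreasing,
like `1 - x`; the product of two nonnegative convex functions that vary in the same direction is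
convex, so `(1 - x) f / (f + b)` is convex and `t = 1 - a (1 - x) f / (f + b)` is concave.
-/

open Set

theorem ContDiffOn.hasDerivAt_deriv {f : ℝ → ℝ} {s : Set ℝ} (hf : ContDiffOn ℝ 2 f s)
    (hs : IsOpen s) {x : ℝ} (hx : x ∈ s) : HasDerivAt (deriv f) (deriv (deriv f) x) x :=
  (((hf.deriv_of_isOpen hs (by norm_num : (1 : WithTop ℕ∞) + 1 ≤ 2)).contDiffAt
    (hs.mem_nhds hx)).differentiableAt one_ne_zero).hasDerivAt

theorem concaveOn_inv_of_two_mul_sq_deriv_le {s : Set ℝ} (hs : Convex ℝ s) (hso : IsOpen s)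
    {u u' u'' : ℝ → ℝ} (hu₀ : ∀ x ∈ s, 0 < u x) (hu : ∀ x ∈ s, HasDerivAt u (u' x) x)
    (hu' : ∀ x ∈ s, HasDerivAt u' (u'' x) x) (h : ∀ x ∈ s, 2 * u' x ^ 2 ≤ u'' x * u x) :
    ConcaveOn ℝ s (fun x => (u x)⁻¹) := by
  have hinv : ∀ x ∈ s, HasDerivAt (fun y => (u y)⁻¹) (-u' x / u x ^ 2) x :=
    fun x hx => (hu x hx).inv (hu₀ x hx).ne'
  have hinv' : ∀ x ∈ s, HasDerivAt (fun y => -u' y / u y ^ 2)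
      ((2 * u' x ^ 2 - u'' x * u x) / u x ^ 3) x := by
    intro x hx
    have hux := (hu₀ x hx).ne'
    refine ((hu' x hx).fun_neg.div ((hu x hx).fun_pow 2) (pow_ne_zero 2 hux)).congr_deriv ?_
    field_simp
    ring
  refine concaveOn_of_hasDerivWithinAt2_nonpos (f' := fun x => -u' x / u x ^ 2)
    (f'' := fun x => (2 * u' x ^ 2 - u'' x * u x) / u x ^ 3) hs
    (fun x hx => (hinv x hx).continuousAt.continuousWithinAt) ?_ ?_ ?_ <;>
    simp only [hso.interior_eq]
  · exact fun x hx => (hinv x hx).hasDerivWithinAt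
  · exact fun x hx => (hinv' x hx).hasDerivWithinAt
  · intro x hx
    have := hu₀ x hx
    exact div_nonpos_of_nonpos_of_nonneg (by linarith [h x hx]) (by positivity)

theorem convexOn_div_add_const {s : Set ℝ} (hs : Convex ℝ s) {f : ℝ → ℝ} {b : ℝ} (hb : 0 ≤ b)
    (hf : ∀ x ∈ s, 0 < f x + b) (hconc : ConcaveOn ℝ s fun x => (f x + b)⁻¹) :
    ConvexOn ℝ s fun x => f x / (f x + b) := by
  refine ((convexOn_const 1 hs).sub (hconc.smul hb)).congr fun x hx => ?_
  have := (hf x hx).ne'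
  simp only [Pi.sub_apply, smul_eq_mul]
  field_simp
  ring

theorem antitoneOn_div_add_const {s : Set ℝ} {f : ℝ → ℝ} {b : ℝ} (hb : 0 ≤ b)
    (hf : ∀ x ∈ s, 0 < f x + b) (hanti : AntitoneOn f s) :
    AntitoneOn (fun x => f x / (f x + b)) s := by
  intro x hx y hy hxy
  have hfxy := hanti hx hy hxy
  rw [div_le_div_iff₀ (hf y hy) (hf x hx)]
  nlinarith

theorem convexOn_sub_mul {s : Set ℝ} (hs : Convex ℝ s) {c : ℝ} (hsc : s ⊆ Iic c) {g : ℝ → ℝ}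
    (hg : ConvexOn ℝ s g) (hg₀ : ∀ x ∈ s, 0 ≤ g x) (hanti : AntitoneOn g s) :
    ConvexOn ℝ s fun x => (c - x) * g x := by
  have hlin : ConvexOn ℝ s fun x => c - x := (convexOn_const c hs).sub (concaveOn_id hs)
  have hlin_anti : AntitoneOn (fun x => c - x) s := fun _ _ _ _ hxy => sub_le_sub_left hxy c
  exact hlin.mul hg (fun x hx => sub_nonneg.2 (hsc hx)) hg₀ (hlin_anti.monovaryOn hanti)

theorem stmt_0 (f : ℝ → ℝ) (a b : ℝ) (ha : 0 < a) (hb : 0 < b)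
    (hpos : ∀ x ∈ Set.Icc (0:ℝ) 1, 0 < f x)
    (hanti : AntitoneOn f (Set.Icc (0:ℝ) 1))
    (hC2 : ContDiffOn ℝ 2 f (Set.Icc (0:ℝ) 1))
    (hcond : ∀ x ∈ Set.Ioo (0:ℝ) 1,
      deriv (deriv f) x * (f x + b) ≥ 2 * (deriv f x) ^ 2) :
    ConcaveOn ℝ (Set.Ioo (0:ℝ) 1)
      (fun x => 1 - a * (1 - x) * (f x / (f x + b))) := by
  have hsub : Ioo (0:ℝ) 1 ⊆ Icc 0 1 := Ioo_subset_Icc_self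
  have hfb : ∀ x ∈ Ioo (0:ℝ) 1, 0 < f x + b := fun x hx => by linarith [hpos x (hsub hx)]
  have hdf : ∀ x ∈ Ioo (0:ℝ) 1, HasDerivAt (fun y => f y + b) (deriv f x) x := fun x hx =>
    ((hC2.contDiffAt (Icc_mem_nhds hx.1 hx.2)).differentiableAt two_ne_zero).hasDerivAt.add_const b
  have hdf' : ∀ x ∈ Ioo (0:ℝ) 1, HasDerivAt (deriv f) (deriv (deriv f) x) x := fun x hx =>
    (hC2.mono hsub).hasDerivAt_deriv isOpen_Ioo hx
  have hg : ConvexOn ℝ (Ioo 0 1) fun x => f x / (f x + b) :=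
    convexOn_div_add_const (convex_Ioo 0 1) hb.le hfb
      (concaveOn_inv_of_two_mul_sq_deriv_le (convex_Ioo 0 1) isOpen_Ioo hfb hdf hdf' hcond)
  have hprod : ConvexOn ℝ (Ioo 0 1) fun x => (1 - x) * (f x / (f x + b)) :=
    convexOn_sub_mul (convex_Ioo 0 1) (fun x hx => hx.2.le) hg
      (fun x hx => (div_pos (hpos x (hsub hx)) (hfb x hx)).le)
      (antitoneOn_div_add_const hb.le hfb (hanti.mono hsub))
  refine ((concaveOn_const 1 (convex_Ioo 0 1)).sub (hprod.smul ha.le)).congr fun x _ => ?_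
  simp only [Pi.sub_apply, smul_eq_mul]
  ring
end

section
/- For every μ > 0, T_s > 0, T_w > 0, and ρ ∈ (0,1), the function f(ρ) = e^{-μρT_s}/(μρ) satisfies f''(ρ)·(f(ρ) + T_s + T_w) > 2·(f'(ρ))². -/
/-! Writing `E = e^{-μρT_s}`, `u = μρT_s` and `v = μρT_w`, one finds
`f' = -E(u + 1)/(μρ²)` and `f'' = E(u² + 2u + 2)/(μρ³)`, so that
`f''(f + T_s + T_w) - 2f'² = E/(μ²ρ⁴) · ((u² + 2u + 2)(u + v) - E(u² + 2u))`,
which is positive because `E ≤ 1` and `u³ + u² > 0`. -/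

open Real Filter Topology

noncomputable section

def idleMean (μ Ts r : ℝ) : ℝ := exp (-(μ * r * Ts)) / (μ * r)

def idleMeanDeriv (μ Ts r : ℝ) : ℝ :=
  -(exp (-(μ * r * Ts)) * (μ * Ts * r + 1)) / (μ * r ^ 2)

def idleMeanDeriv2 (μ Ts r : ℝ) : ℝ :=
  exp (-(μ * r * Ts)) * ((μ * Ts * r) ^ 2 + 2 * (μ * Ts * r) + 2) / (μ * r ^ 3)

end

variable {μ r : ℝ} (Ts : ℝ)

lemma hasDerivAt_exp_neg_mul (r : ℝ) :
    HasDerivAt (fun x => exp (-(μ * x * Ts))) (exp (-(μ * r * Ts)) * -(μ * Ts)) r := by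
  simpa using (((hasDerivAt_id r).const_mul μ).mul_const Ts).neg.exp

lemma hasDerivAt_idleMean (hμ : μ ≠ 0) (hr : r ≠ 0) :
    HasDerivAt (idleMean μ Ts) (idleMeanDeriv μ Ts r) r := by
  have hden : HasDerivAt (fun x => μ * x) μ r := by simpa using (hasDerivAt_id r).const_mul μ
  refine ((hasDerivAt_exp_neg_mul Ts r).div hden (mul_ne_zero hμ hr)).congr_deriv ?_
  unfold idleMeanDeriv
  field_simp
  ring

lemma deriv_idleMean_eventuallyEq (hμ : μ ≠ 0) (hr : r ≠ 0) :
    deriv (idleMean μ Ts) =ᶠ[𝓝 r] idleMeanDeriv μ Ts := by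
  filter_upwards [isOpen_ne.mem_nhds hr] with x hx
  exact (hasDerivAt_idleMean Ts hμ hx).deriv

lemma hasDerivAt_idleMeanDeriv (hμ : μ ≠ 0) (hr : r ≠ 0) :
    HasDerivAt (idleMeanDeriv μ Ts) (idleMeanDeriv2 μ Ts r) r := by
  have hnum : HasDerivAt (fun x => -(exp (-(μ * x * Ts)) * (μ * Ts * x + 1)))
      (-(exp (-(μ * r * Ts)) * -(μ * Ts) * (μ * Ts * r + 1) +
        exp (-(μ * r * Ts)) * (μ * Ts))) r := by
    have hlin : HasDerivAt (fun x => μ * Ts * x + 1) (μ * Ts) r := by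
      simpa using ((hasDerivAt_id r).const_mul (μ * Ts)).add_const 1
    exact ((hasDerivAt_exp_neg_mul Ts r).mul hlin).neg
  have hden : HasDerivAt (fun x => μ * x ^ 2) (μ * (2 * r)) r := by
    simpa using (hasDerivAt_pow 2 r).const_mul μ
  refine (hnum.div hden (by positivity)).congr_deriv ?_
  unfold idleMeanDeriv2
  field_simp
  ring

lemma deriv_deriv_idleMean (hμ : μ ≠ 0) (hr : r ≠ 0) :
    deriv (deriv (idleMean μ Ts)) r = idleMeanDeriv2 μ Ts r := by
  rw [(deriv_idleMean_eventuallyEq Ts hμ hr).deriv_eq, (hasDerivAt_idleMeanDeriv Ts hμ hr).deriv]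

lemma two_mul_mul_add_one_sq_lt {E u v : ℝ} (hE : E ≤ 1) (hu : 0 < u) (hv : 0 ≤ v) :
    2 * E * (u + 1) ^ 2 < (u ^ 2 + 2 * u + 2) * (E + u + v) := by
  nlinarith [mul_nonneg (sub_nonneg.2 hE) (by positivity : (0 : ℝ) ≤ u ^ 2 + 2 * u),
    pow_pos hu 3, mul_nonneg (by positivity : (0 : ℝ) ≤ u ^ 2 + 2 * u + 2) hv]

lemma idleMeanDeriv2_mul_lt {Tw : ℝ} (hμ : 0 < μ) (hTs : 0 < Ts) (hTw : 0 ≤ Tw) (hr : 0 < r) :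
    2 * idleMeanDeriv μ Ts r ^ 2 < idleMeanDeriv2 μ Ts r * (idleMean μ Ts r + Ts + Tw) := by
  set E := exp (-(μ * r * Ts))
  have hE : E ≤ 1 := exp_le_one_iff.2 (by have := mul_pos (mul_pos hμ hr) hTs; linarith)
  have key := two_mul_mul_add_one_sq_lt hE (by positivity : 0 < μ * Ts * r)
    (by positivity : 0 ≤ μ * r * Tw)
  have hdiff :
      idleMeanDeriv2 μ Ts r * (idleMean μ Ts r + Ts + Tw) - 2 * idleMeanDeriv μ Ts r ^ 2 =
      E / (μ ^ 2 * r ^ 4) * ((((μ * Ts * r) ^ 2 + 2 * (μ * Ts * r) + 2) *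
        (E + μ * Ts * r + μ * r * Tw)) - 2 * E * (μ * Ts * r + 1) ^ 2) := by
    unfold idleMeanDeriv2 idleMean idleMeanDeriv
    field_simp
    ring
  rw [← sub_pos, hdiff]
  exact mul_pos (by positivity) (sub_pos.2 key)

theorem stmt_3 (μ Ts Tw : ℝ) (hμ : 0 < μ) (hTs : 0 < Ts) (hTw : 0 < Tw)
    (ρ : ℝ) (hρ : ρ ∈ Set.Ioo (0:ℝ) 1) :
    let f : ℝ → ℝ := fun r => Real.exp (-(μ * r * Ts)) / (μ * r)
    deriv (deriv f) ρ * (f ρ + Ts + Tw) > 2 * (deriv f ρ) ^ 2 := by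
  intro f
  change 2 * deriv (idleMean μ Ts) ρ ^ 2 <
    deriv (deriv (idleMean μ Ts)) ρ * (idleMean μ Ts ρ + Ts + Tw)
  rw [deriv_deriv_idleMean Ts hμ.ne' hρ.1.ne', (hasDerivAt_idleMean Ts hμ.ne' hρ.1.ne').deriv]
  exact idleMeanDeriv2_mul_lt Ts hμ hTs hTw.le hρ.1
end

section
/- For every μ > 0, T_s > 0, T_w > 0, T_max ≥ 0, and ρ ∈ (0,1), the function f(ρ) = 1/(μρ) + T_max - T_s satisfies f''(ρ)·(f(ρ) + T_s + T_w) > 2·(f'(ρ))². -/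
/-!
Writing `1 / (μ r) = μ⁻¹ r⁻¹`, one gets `f' = -μ⁻¹ ρ⁻²` and `f'' = 2 μ⁻¹ ρ⁻³`, so
`f'' (f + T_s + T_w) - 2 f'² = 2 (T_max + T_w) / (μ ρ³)`: the `1 / (μ ρ)` part of `f` exactly
cancels `2 f'²`, and what remains is positive.
-/

lemma deriv_const_mul_zpow (a : ℝ) (m : ℤ) :
    deriv (fun r : ℝ => a * r ^ m) = fun r => a * m * r ^ (m - 1) := by
  rw [deriv_const_mul_field', deriv_zpow']
  simp only [mul_assoc]

lemma one_div_mul_add_eq_zpow (μ c : ℝ) :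
    (fun r : ℝ => 1 / (μ * r) + c) = fun r => μ⁻¹ * r ^ (-1 : ℤ) + c := by
  funext r
  rw [zpow_neg_one, one_div, mul_inv]

lemma deriv_one_div_mul_add (μ c : ℝ) :
    deriv (fun r : ℝ => 1 / (μ * r) + c) = fun r => -μ⁻¹ * r ^ (-2 : ℤ) := by
  funext r
  rw [one_div_mul_add_eq_zpow, deriv_add_const, deriv_const_mul_zpow]
  norm_num

lemma deriv_deriv_one_div_mul_add (μ c : ℝ) :
    deriv (deriv (fun r : ℝ => 1 / (μ * r) + c)) = fun r => 2 * μ⁻¹ * r ^ (-3 : ℤ) := by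
  rw [deriv_one_div_mul_add, deriv_const_mul_zpow]
  funext r
  norm_num [mul_comm]

theorem stmt_6_general (μ Ts Tw Tmax : ℝ) (hμ : 0 < μ) (hTw : 0 < Tw)
    (hTmax : 0 ≤ Tmax) (ρ : ℝ) (hρ : ρ ∈ Set.Ioo (0:ℝ) 1) :
    let f : ℝ → ℝ := fun r => 1 / (μ * r) + Tmax - Ts
    deriv (deriv f) ρ * (f ρ + Ts + Tw) > 2 * (deriv f ρ) ^ 2 := by
  intro f
  have hf : f = fun r => 1 / (μ * r) + (Tmax - Ts) := by
    funext r
    exact add_sub_assoc _ _ _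
  have hρ0 : 0 < ρ := hρ.1
  rw [hf, deriv_deriv_one_div_mul_add, deriv_one_div_mul_add]
  have gap_eq : 2 * μ⁻¹ * ρ ^ (-3 : ℤ) * (1 / (μ * ρ) + (Tmax - Ts) + Ts + Tw)
      - 2 * (-μ⁻¹ * ρ ^ (-2 : ℤ)) ^ 2 = 2 * (Tmax + Tw) / (μ * ρ ^ 3) := by
    simp only [zpow_neg, zpow_ofNat]
    field_simp
    ring
  have hpos : 0 < 2 * (Tmax + Tw) / (μ * ρ ^ 3) := by positivity
  linarith

theorem stmt_6 (μ Ts Tw Tmax : ℝ) (hμ : 0 < μ) (hTs : 0 < Ts) (hTw : 0 < Tw)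
    (hTmax : 0 ≤ Tmax) (ρ : ℝ) (hρ : ρ ∈ Set.Ioo (0:ℝ) 1) :
    let f : ℝ → ℝ := fun r => 1 / (μ * r) + Tmax - Ts
    deriv (deriv f) ρ * (f ρ + Ts + Tw) > 2 * (deriv f ρ) ^ 2 :=
  stmt_6_general μ Ts Tw Tmax hμ hTw hTmax ρ hρ
end

section
/- Let Q ≥ 1 be a natural number and T_s, T_w, μ, ρ > 0, and set x = μρT_s. Then T_s·x^Q·(μρ·((T_s+T_w)Γ(Q) - T_s·Γ(Q,x)) + Γ(Q+1,x)) + Γ(Q+1,x)·((T_s+T_w)Γ(Q) - T_s·Γ(Q,x)) > 0. -/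
/-- The upper incomplete Gamma function `Γ(Q, x) = ∫_x^∞ t^(Q-1) e^(-t) dt`
for a natural number argument `Q`. -/
noncomputable def upperGamma (Q : ℕ) (x : ℝ) : ℝ :=
  ∫ t in Set.Ioi x, t ^ (Q - 1) * Real.exp (-t)

/-! Since `0 < Γ(Q, x) ≤ Γ(Q)` for `x ≥ 0`, both `Γ(Q + 1, x)` and `(T_s + T_w) Γ(Q) - T_s Γ(Q, x)`
are positive, and the expression is a sum of products of nonnegative factors with one positive
summand. -/

open MeasureTheory Set Real

lemma integrableOn_pow_mul_exp_neg_Ioi (n : ℕ) {x : ℝ} (hx : 0 ≤ x) :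
    IntegrableOn (fun t => t ^ n * exp (-t)) (Ioi x) := by
  have h := GammaIntegral_convergent (s := n + 1) (by positivity)
  refine (h.congr_fun (fun t _ => ?_) measurableSet_Ioi).mono_set (Ioi_subset_Ioi hx)
  rw [add_sub_cancel_right, rpow_natCast, mul_comm]

lemma upperGamma_pos (Q : ℕ) {x : ℝ} (hx : 0 ≤ x) : 0 < upperGamma Q x := by
  have hpos : ∀ t ∈ Ioi x, 0 < t ^ (Q - 1) * exp (-t) := fun t ht =>
    have : 0 < t := hx.trans_lt ht
    by positivity
  rw [upperGamma, setIntegral_pos_iff_support_of_nonneg_ae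
    ((ae_restrict_iff' measurableSet_Ioi).2 (.of_forall fun t ht => (hpos t ht).le))
    (integrableOn_pow_mul_exp_neg_Ioi _ hx)]
  calc (0 : ENNReal) < volume (Ioi x) := by simp
    _ ≤ _ := measure_mono (subset_inter (fun t ht => (hpos t ht).ne') subset_rfl)

lemma upperGamma_antitoneOn (Q : ℕ) : AntitoneOn (upperGamma Q) (Ici 0) := by
  intro x hx y _ hxy
  refine setIntegral_mono_set (integrableOn_pow_mul_exp_neg_Ioi _ hx) ?_
    (.of_forall (Ioi_subset_Ioi hxy))
  filter_upwards [ae_restrict_mem measurableSet_Ioi] with t ht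
  have : 0 < t := lt_of_le_of_lt hx ht
  positivity

lemma upperGamma_zero_right {Q : ℕ} (hQ : 1 ≤ Q) : upperGamma Q 0 = Gamma Q := by
  rw [Gamma_eq_integral (by exact_mod_cast hQ), upperGamma]
  refine setIntegral_congr_fun measurableSet_Ioi fun t _ => ?_
  rw [← Nat.cast_one (R := ℝ), ← Nat.cast_sub hQ, rpow_natCast, mul_comm]

lemma upperGamma_le_Gamma {Q : ℕ} (hQ : 1 ≤ Q) {x : ℝ} (hx : 0 ≤ x) :
    upperGamma Q x ≤ Gamma Q :=
  upperGamma_zero_right hQ ▸ upperGamma_antitoneOn Q self_mem_Ici hx hx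

theorem stmt_9 (Q : ℕ) (hQ : 1 ≤ Q) (Ts Tw μ ρ : ℝ) (hTs : 0 < Ts)
    (hTw : 0 < Tw) (hμ : 0 < μ) (hρ : 0 < ρ) :
    let x := μ * ρ * Ts
    Ts * x ^ Q *
        (μ * ρ * ((Ts + Tw) * Real.Gamma Q - Ts * upperGamma Q x) +
          upperGamma (Q + 1) x) +
      upperGamma (Q + 1) x * ((Ts + Tw) * Real.Gamma Q - Ts * upperGamma Q x)
      > 0 := by
  intro x
  have hx : 0 < x := by positivity
  have hB : 0 < upperGamma (Q + 1) x := upperGamma_pos (Q + 1) hx.le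
  have hA : 0 < (Ts + Tw) * Gamma Q - Ts * upperGamma Q x := by
    have := upperGamma_le_Gamma hQ hx.le
    have := Gamma_pos_of_pos (by exact_mod_cast hQ : (0 : ℝ) < Q)
    nlinarith
  positivity
end

section
/- Let E: [0,C] → ℝ be concave with E defined on [0,C], N ≥ 1, and X ∈ [0, N·C]. Among all vectors (x_1,…,x_N) with 0 ≤ x_i ≤ C and Σx_i = X, the total cost Σ_i E(x_i) is minimized by the water-filling allocation x_i = min(C, max(0, X - (i-1)·C)). -/
/-!
For concave `E`, pushing two loads in `[0, C]` apart while keeping their sum does not increase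
their total cost. So adding a link with load `x₀` to the water-filling of `S` over `n` links
costs at least as much as water-filling `x₀ + S` over `n + 1` links: push the pair
`(x₀, min C S)` apart to `(min C (x₀ + S), x₀ + min C S - min C (x₀ + S))`, where the first
entry is the load of the first water-filled link, and handle the remaining load by induction
on `n`. Adding the links of a feasible allocation one at a time gives the theorem.
-/

open Finset Set

theorem ConcaveOn.map_add_map_le_of_add_eq {𝕜 : Type*} [Field 𝕜] [LinearOrder 𝕜]
    [IsStrictOrderedRing 𝕜] {s : Set 𝕜} {f : 𝕜 → 𝕜} {u v a b : 𝕜} (hf : ConcaveOn 𝕜 s f)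
    (hu : u ∈ s) (hv : v ∈ s) (ha : a ∈ Icc u v) (hab : a + b = u + v) :
    f u + f v ≤ f a + f b := by
  obtain ⟨hua, hav⟩ := ha
  rcases (hua.trans hav).eq_or_lt with rfl | huv
  · obtain rfl : a = u := le_antisymm hav hua
    obtain rfl : b = a := by linarith
    rfl
  set t := (v - a) / (v - u)
  have ht : t * (v - u) = v - a := div_mul_cancel₀ _ (sub_pos.2 huv).ne'
  have ht₀ : 0 ≤ t := div_nonneg (sub_nonneg.2 hav) (sub_pos.2 huv).le
  have ht₁ : 0 ≤ 1 - t := by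
    rw [sub_nonneg, div_le_one (sub_pos.2 huv)]
    linarith
  have hfa := hf.2 hu hv ht₀ ht₁ (add_sub_cancel t 1)
  have hfb := hf.2 hu hv ht₁ ht₀ (sub_add_cancel 1 t)
  simp only [smul_eq_mul] at hfa hfb
  rw [show t * u + (1 - t) * v = a by linear_combination -ht] at hfa
  rw [show (1 - t) * u + t * v = b by linear_combination ht - hab] at hfb
  linarith

/-- The load of link `i` (counted from `0`) when `X` is water-filled into links of capacity `C`. -/
def waterFill (C X : ℝ) (i : ℕ) : ℝ := min C (max 0 (X - i * C))

theorem waterFill_zero {C X : ℝ} (hX : 0 ≤ X) : waterFill C X 0 = min C X := by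
  simp [waterFill, hX]

theorem waterFill_succ {C : ℝ} (hC : 0 ≤ C) (X : ℝ) (i : ℕ) :
    waterFill C X (i + 1) = waterFill C (X - min C X) i := by
  unfold waterFill
  rcases le_total X C with hXC | hCX
  · have hiC : 0 ≤ (i : ℝ) * C := by positivity
    rw [min_eq_right hXC, max_eq_left (by push_cast; linarith), max_eq_left (by linarith)]
  · rw [min_eq_left hCX]
    push_cast
    ring_nf

theorem sum_waterFill_succ (E : ℝ → ℝ) {C X : ℝ} (hC : 0 ≤ C) (hX : 0 ≤ X) (n : ℕ) :
    ∑ i : Fin (n + 1), E (waterFill C X i) =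
      E (min C X) + ∑ i : Fin n, E (waterFill C (X - min C X) i) := by
  simp only [Fin.sum_univ_succ, Fin.val_zero, Fin.val_succ, waterFill_zero hX,
    waterFill_succ hC]

theorem sum_waterFill_add_le {E : ℝ → ℝ} {C : ℝ} (hE : ConcaveOn ℝ (Icc 0 C) E) (n : ℕ)
    {x₀ S : ℝ} (hx₀ : x₀ ∈ Icc 0 C) (hS : S ∈ Icc 0 (n * C)) :
    ∑ i : Fin (n + 1), E (waterFill C (x₀ + S) i) ≤ E x₀ + ∑ i : Fin n, E (waterFill C S i) := by
  induction n generalizing x₀ S with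
  | zero =>
    obtain rfl : S = 0 := by simpa using hS
    simp [waterFill_zero hx₀.1, min_eq_right hx₀.2]
  | succ n ih =>
    obtain ⟨hx₀0, hx₀C⟩ := hx₀
    have hC : 0 ≤ C := hx₀0.trans hx₀C
    set m := min C S
    set a := min C (x₀ + S)
    set b := x₀ + m - a with hb
    have ha : a = min C (x₀ + m) := by
      rw [← min_add_add_left, ← min_assoc, min_eq_left (le_add_of_nonneg_left hx₀0)]
    have hma : m ≤ a := le_min (min_le_left _ _) (by linarith [min_le_right C S])
    have hx₀a : x₀ ≤ a := le_min hx₀C (by linarith [hS.1])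
    have hax : a ≤ x₀ + m := ha ▸ min_le_right _ _
    have hSm : S - m ∈ Icc 0 (n * C) := by
      refine ⟨sub_nonneg.2 (min_le_right _ _), ?_⟩
      rcases le_total S C with hSC | hCS
      · rw [show m = S from min_eq_right hSC, sub_self]
        positivity
      · have hS' : S ≤ n * C + C := by simpa [add_mul] using hS.2
        linarith [show m = C from min_eq_left hCS]
    have hpush : E b + E a ≤ E x₀ + E m :=
      hE.map_add_map_le_of_add_eq ⟨by linarith, by linarith⟩
        ⟨hx₀0.trans hx₀a, min_le_left _ _⟩ ⟨by linarith, hx₀a⟩ (by ring)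
    calc ∑ i : Fin (n + 1 + 1), E (waterFill C (x₀ + S) i)
        = E a + ∑ i : Fin (n + 1), E (waterFill C (b + (S - m)) i) := by
          rw [sum_waterFill_succ E hC (by linarith [hS.1]),
            show x₀ + S - a = b + (S - m) by rw [hb]; ring]
      _ ≤ E a + (E b + ∑ i : Fin n, E (waterFill C (S - m) i)) := by
          gcongr
          exact ih ⟨by linarith, by linarith⟩ hSm
      _ ≤ E x₀ + (E m + ∑ i : Fin n, E (waterFill C (S - m) i)) := by linarith
      _ = E x₀ + ∑ i : Fin (n + 1), E (waterFill C S i) := by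
          rw [sum_waterFill_succ E hC hS.1]

theorem sum_waterFill_le_sum {E : ℝ → ℝ} {C : ℝ} (hE : ConcaveOn ℝ (Icc 0 C) E) {n : ℕ}
    (x : Fin n → ℝ) (hx : ∀ i, x i ∈ Icc 0 C) :
    ∑ i : Fin n, E (waterFill C (∑ j, x j) i) ≤ ∑ i, E (x i) := by
  induction n with
  | zero => simp
  | succ n ih =>
    have htail : ∑ j : Fin n, x j.succ ∈ Icc 0 (n * C) :=
      ⟨sum_nonneg fun j _ => (hx j.succ).1,
        by simpa using
          sum_le_card_nsmul univ (fun j : Fin n => x j.succ) C fun j _ => (hx j.succ).2⟩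
    calc ∑ i : Fin (n + 1), E (waterFill C (∑ j, x j) i)
        ≤ E (x 0) + ∑ i : Fin n, E (waterFill C (∑ j : Fin n, x j.succ) i) := by
          rw [Fin.sum_univ_succ x]
          exact sum_waterFill_add_le hE n (hx 0) htail
      _ ≤ E (x 0) + ∑ i : Fin n, E (x i.succ) := by
          grw [ih _ fun j => hx j.succ]
      _ = ∑ i, E (x i) := (Fin.sum_univ_succ fun i => E (x i)).symm

theorem stmt_12_general (E : ℝ → ℝ) (C X : ℝ) (N : ℕ)
    (hconc : ConcaveOn ℝ (Set.Icc (0:ℝ) C) E) :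
    ∀ x : Fin N → ℝ, (∀ i, x i ∈ Set.Icc (0:ℝ) C) → (∑ i, x i = X) →
      ∑ i : Fin N, E (min C (max 0 (X - (i : ℕ) * C))) ≤ ∑ i, E (x i) := by
  rintro x hx rfl
  exact sum_waterFill_le_sum hconc x hx

theorem stmt_12 (E : ℝ → ℝ) (C X : ℝ) (N : ℕ) (hN : 1 ≤ N) (hC : 0 < C)
    (hconc : ConcaveOn ℝ (Set.Icc (0:ℝ) C) E)
    (hX : X ∈ Set.Icc (0:ℝ) ((N : ℝ) * C)) :
    ∀ x : Fin N → ℝ, (∀ i, x i ∈ Set.Icc (0:ℝ) C) → (∑ i, x i = X) →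
      ∑ i : Fin N, E (min C (max 0 (X - (i : ℕ) * C))) ≤ ∑ i, E (x i) :=
  stmt_12_general E C X N hconc
end
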